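/- arXiv:1309.3145 — 3 statements merged into one kernel-verified Lean document; each statement's English description precedes it below -/
import Mathlib

section
/- Let $T$ be a bounded positive linear operator on $L^p$ with eventual strong positivity and such that $T^n$ is compact for some $n \ge 1$ and $r(T) > 0$. Then any two eigenfunctions of $T$ that are non-negative a.e. and nonzero are scalar multiples of each other (i.e., the non-negative eigenfunction is unique up to scale). -/
/-!
Both eigenfunctions are a.e. strictly positive, with positive eigenvalues, by eventual strong
positivity; say `a ≤ b`. The compactness of `T ^ n` enters through one fact: if `g ≰ t_k f` for
every `k` although `g x ≤ t_k f x` eventually for a.e. `x`, then the normalised positive parts of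
`g - t_k f` are unit vectors `v_k ≥ 0` with `b ^ n v_k ≤ T ^ n v_k` and `v_k → 0` a.e., which a
compact operator does not allow. With `t_k = k` this yields a least `σ > 0` with `g ≤ σ f`.
Applying `T` to `g ≤ σ f` and using minimality gives `b ≤ a`, so `a = b` and `σ f - g` is a
non-negative eigenfunction. Were it nonzero, it would be positive a.e., and `t_k ↑ σ` would
contradict the minimality of `σ`.
-/

open MeasureTheory Filter Topology
open scoped ENNReal

section OrderedModule

variable {E : Type*} [AddCommGroup E] [Module ℝ E]

theorem exists_pos_isLeast_setOf_le_smul [PartialOrder E] [IsOrderedAddMonoid E]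
    [PosSMulMono ℝ E] [TopologicalSpace E] [OrderClosedTopology E] [ContinuousSMul ℝ E]
    {f g : E} (hf0 : 0 ≤ f) (hg0 : 0 ≤ g) (hg : g ≠ 0) (hS : ∃ t : ℝ, g ≤ t • f) :
    ∃ σ, 0 < σ ∧ IsLeast {t : ℝ | g ≤ t • f} σ := by
  have hpos : ∀ t : ℝ, g ≤ t • f → 0 < t := fun t ht => by
    by_contra! ht0
    exact hg (le_antisymm (ht.trans (smul_nonpos_of_nonpos_of_nonneg ht0 hf0)) hg0)
  have hclosed : IsClosed {t : ℝ | g ≤ t • f} :=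
    isClosed_le continuous_const (continuous_id.smul continuous_const)
  have hleast := hclosed.isLeast_csInf hS ⟨0, fun t ht => (hpos t ht).le⟩
  exact ⟨_, hpos _ hleast.1, hleast⟩

variable {F : Type*} [FunLike F E E] [LinearMapClass F ℝ E E] {K : F}

theorem le_of_isLeast_setOf_le_smul [PartialOrder E] [PosSMulMono ℝ E] (hK : Monotone K)
    {f g : E} {a b σ : ℝ} (hfa : K f = a • f) (hgb : K g = b • g) (hb : 0 < b) (hσ : 0 < σ)
    (hleast : IsLeast {t : ℝ | g ≤ t • f} σ) : b ≤ a := by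
  have hKg : b • g ≤ (σ * a) • f := by
    simpa [hgb, hfa, smul_smul] using hK hleast.1
  have hmem : σ * a / b ∈ {t : ℝ | g ≤ t • f} :=
    calc g = b⁻¹ • b • g := (inv_smul_smul₀ hb.ne' g).symm
      _ ≤ b⁻¹ • (σ * a) • f := smul_le_smul_of_nonneg_left hKg (inv_nonneg.2 hb.le)
      _ = (σ * a / b) • f := by rw [smul_smul, div_eq_inv_mul]
  have hσb := hleast.2 hmem
  rw [le_div_iff₀ hb] at hσb
  exact le_of_mul_le_mul_left hσb hσ

theorem smul_posPart_le_of_smul_le [Lattice E] [PosSMulMono ℝ E]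
    (hK : Monotone K) {c : ℝ} (hc : 0 < c) {u : E} (h : c • u ≤ K u) : c • u⁺ ≤ K u⁺ := by
  have hsup : c • u⁺ = c • u ⊔ 0 := by
    simpa only [OrderIso.smulRight_apply, smul_zero, posPart_def] using
      (OrderIso.smulRight (β := E) hc).map_sup u 0
  rw [hsup]
  exact sup_le (h.trans (hK (le_posPart u))) (by simpa using hK (posPart_nonneg u))

end OrderedModule

theorem norm_le_norm_inf_add_norm_sub {E : Type*} [NormedAddCommGroup E] [Lattice E]
    [HasSolidNorm E] [IsOrderedAddMonoid E] {x y : E} (hxy : x ≤ y) (z : E) :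
    ‖x‖ ≤ ‖x ⊓ z‖ + ‖y - z‖ := by
  have hpos : ‖(x - z)⁺‖ ≤ ‖y - z‖ := by
    refine norm_le_norm_of_abs_le_abs ?_
    rw [abs_of_nonneg (posPart_nonneg _)]
    exact (posPart_mono (sub_le_sub_right hxy z)).trans (sup_le (le_abs_self _) (abs_nonneg _))
  calc ‖x‖ = ‖x ⊓ z + (x - z)⁺‖ := by rw [inf_eq_sub_posPart_sub, sub_add_cancel]
    _ ≤ ‖x ⊓ z‖ + ‖y - z‖ := (norm_add_le _ _).trans (add_le_add_right hpos _)

theorem ContinuousLinearMap.pow_apply_of_apply_eq_smul {R M : Type*} [CommSemiring R]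
    [TopologicalSpace M] [AddCommMonoid M] [Module R M] {T : M →L[R] M} {a : R} {f : M}
    (h : T f = a • f) (n : ℕ) : (T ^ n) f = a ^ n • f := by
  induction n with
  | zero => simp
  | succ n ih => rw [pow_succ, mul_apply_eq_comp, h, map_smul, ih, smul_smul, ← pow_succ']

theorem IsCompactOperator.exists_subseq_tendsto {𝕜 E F : Type*} [NontriviallyNormedField 𝕜]
    [NormedAddCommGroup E] [NormedSpace 𝕜 E] [NormedAddCommGroup F] [NormedSpace 𝕜 F]
    {K : E →L[𝕜] F} (hK : IsCompactOperator K) {v : ℕ → E} {R : ℝ} (hv : ∀ j, ‖v j‖ ≤ R) :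
    ∃ z, ∃ θ : ℕ → ℕ, StrictMono θ ∧ Tendsto (fun j => K (v (θ j))) atTop (𝓝 z) := by
  obtain ⟨z, -, θ, hθ, hz⟩ :=
    (IsCompactOperator.isCompact_closure_image_of_bounded (f := (K : E →ₗ[𝕜] F)) hK
      (Metric.isBounded_closedBall (x := 0) (r := R))).tendsto_subseq
      (x := fun j => K (v j)) fun j => subset_closure ⟨v j, by simpa using hv j, rfl⟩
  exact ⟨z, θ, hθ, hz⟩

namespace MeasureTheory.Lp

variable {X : Type*} [MeasurableSpace X] {μ : Measure X} {p : ℝ≥0∞}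

instance instPosSMulMono : PosSMulMono ℝ (Lp ℝ p μ) where
  smul_le_smul_of_nonneg_left c hc u v huv := by
    rw [← coeFn_le] at huv ⊢
    filter_upwards [huv, coeFn_smul c u, coeFn_smul c v] with x hx hu hv
    simpa [hu, hv] using mul_le_mul_of_nonneg_left hx hc

variable [Fact (1 ≤ p)]

theorem tendsto_zero_of_dominated {E : Type*} [NormedAddCommGroup E] (hp : p ≠ ∞)
    {w : ℕ → Lp E p μ} {G : X → ℝ} (hG : MemLp G p μ) (hdom : ∀ j, ∀ᵐ x ∂μ, ‖w j x‖ ≤ G x)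
    (hae : ∀ᵐ x ∂μ, Tendsto (fun j => w j x) atTop (𝓝 0)) :
    Tendsto w atTop (𝓝 0) := by
  have hp0 : p ≠ 0 := (zero_lt_one.trans_le Fact.out).ne'
  have hq : 0 < p.toReal := ENNReal.toReal_pos hp0 hp
  have hint : Tendsto (fun j => ∫⁻ x, ‖w j x‖ₑ ^ p.toReal ∂μ) atTop (𝓝 0) := by
    have := tendsto_lintegral_of_dominated_convergence' (F := fun j x => ‖w j x‖ₑ ^ p.toReal)
      (f := 0) (fun x => ‖G x‖ₑ ^ p.toReal)
      (fun j => (Lp.aestronglyMeasurable (w j)).enorm.pow_const _)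
      (fun j => by
        filter_upwards [hdom j] with x hx
        exact ENNReal.rpow_le_rpow (enorm_le_iff_norm_le.2 (hx.trans (Real.le_norm_self _))) hq.le)
      (lintegral_rpow_enorm_lt_top_of_eLpNorm'_lt_top hq
        (by simpa [eLpNorm_eq_eLpNorm' hp0 hp] using hG.eLpNorm_lt_top)).ne
      (by
        filter_upwards [hae] with x hx
        simpa [Function.comp_def, ENNReal.zero_rpow_of_pos hq] using
          ((ENNReal.continuous_rpow_const (y := p.toReal)).tendsto 0).comp
            (by simpa using hx.enorm))
    simpa using this
  have hnorm : Tendsto (fun j => eLpNorm (w j) p μ) atTop (𝓝 0) := by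
    simp_rw [eLpNorm_eq_lintegral_rpow_enorm_toReal hp0 hp]
    simpa [Function.comp_def, ENNReal.zero_rpow_of_pos (inv_pos.2 hq)] using
      ((ENNReal.continuous_rpow_const (y := p.toReal⁻¹)).tendsto 0).comp hint
  rw [tendsto_zero_iff_norm_tendsto_zero]
  simpa [Lp.norm_def, Function.comp_def] using
    (ENNReal.tendsto_toReal ENNReal.zero_ne_top).comp hnorm

theorem not_ae_tendsto_zero_of_smul_le_of_isCompactOperator (hp : p ≠ ∞)
    {K : Lp ℝ p μ →L[ℝ] Lp ℝ p μ} (hK : IsCompactOperator K) {c : ℝ} (hc : 0 < c)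
    {v : ℕ → Lp ℝ p μ} (hv1 : ∀ j, ‖v j‖ = 1) (hv0 : ∀ j, 0 ≤ v j)
    (hvK : ∀ j, c • v j ≤ K (v j)) : ¬ ∀ᵐ x ∂μ, Tendsto (fun j => v j x) atTop (𝓝 0) := by
  intro hae
  -- Along a subsequence `K v → z`; then `c = ‖c • v‖ ≤ ‖c • v ⊓ z‖ + ‖K v - z‖`, and the first
  -- term tends to `0` by dominated convergence since `v → 0` a.e.
  obtain ⟨z, θ, hθ, hz⟩ := hK.exists_subseq_tendsto fun j => (hv1 j).le
  have hz0 : 0 ≤ z := ge_of_tendsto' hz fun j => (smul_nonneg hc.le (hv0 _)).trans (hvK _)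
  set w : ℕ → Lp ℝ p μ := fun j => c • v (θ j) ⊓ z
  have hw : ∀ᵐ x ∂μ, ∀ j, 0 ≤ w j x ∧ w j x ≤ c * v (θ j) x ∧ w j x ≤ z x := by
    refine ae_all_iff.2 fun j => ?_
    filter_upwards [(coeFn_nonneg _).2 (le_inf (smul_nonneg hc.le (hv0 (θ j))) hz0),
      (coeFn_le _ _).2 (inf_le_left : w j ≤ _), (coeFn_le _ _).2 (inf_le_right : w j ≤ _),
      coeFn_smul c (v (θ j))] with x h0 hv hz hsmul
    exact ⟨h0, by simpa [hsmul] using hv, hz⟩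
  have hw0 : Tendsto w atTop (𝓝 0) := by
    refine tendsto_zero_of_dominated hp (Lp.memLp z) (fun j => ?_) ?_
    · filter_upwards [hw] with x hx
      rw [Real.norm_of_nonneg (hx j).1]
      exact (hx j).2.2
    · filter_upwards [hw, hae] with x hx hvx
      refine squeeze_zero (fun j => (hx j).1) (fun j => (hx j).2.1) ?_
      simpa using (hvx.comp hθ.tendsto_atTop).const_mul c
  have hbound : ∀ j, c ≤ ‖w j‖ + ‖K (v (θ j)) - z‖ := fun j => by
    simpa [norm_smul, hv1, abs_of_pos hc] using norm_le_norm_inf_add_norm_sub (hvK (θ j)) z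
  have hlim : Tendsto (fun j => ‖w j‖ + ‖K (v (θ j)) - z‖) atTop (𝓝 0) := by
    simpa using hw0.norm.add (tendsto_iff_norm_sub_tendsto_zero.1 hz)
  exact hc.not_ge (ge_of_tendsto' hlim hbound)

def IsEventuallyStronglyPositive (T : Lp ℝ p μ →L[ℝ] Lp ℝ p μ) : Prop :=
  ∀ f : Lp ℝ p μ, 0 ≤ᵐ[μ] ⇑f → f ≠ 0 → ∃ n : ℕ, 1 ≤ n ∧ ∀ᵐ x ∂μ, 0 < ((T ^ n) f : Lp ℝ p μ) x

theorem IsEventuallyStronglyPositive.pos_and_ae_pos_of_apply_eq_smul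
    {T : Lp ℝ p μ →L[ℝ] Lp ℝ p μ} (hT : IsEventuallyStronglyPositive T) (hmono : Monotone T)
    {f : Lp ℝ p μ} {a : ℝ} (hf0 : 0 ≤ f) (hf : f ≠ 0) (hfa : T f = a • f) :
    0 < a ∧ ∀ᵐ x ∂μ, 0 < f x := by
  obtain ⟨m, hm, hTm⟩ := hT f ((coeFn_nonneg f).2 hf0) hf
  rw [ContinuousLinearMap.pow_apply_of_apply_eq_smul hfa] at hTm
  have hamf : ∀ᵐ x ∂μ, 0 < a ^ m * f x := by
    filter_upwards [hTm, coeFn_smul (a ^ m) f] with x hx hsmul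
    simpa [hsmul] using hx
  have haf : ∀ᵐ x ∂μ, 0 ≤ a * f x := by
    have hTf : 0 ≤ T f := by simpa using hmono hf0
    rw [hfa] at hTf
    filter_upwards [(coeFn_nonneg _).2 hTf, coeFn_smul a f] with x hx hsmul
    simpa [hsmul] using hx
  have : (ae μ).NeBot := by
    rw [ae_neBot]
    rintro rfl
    exact hf (eq_zero_iff_ae_eq_zero.2 (by simp [EventuallyEq]))
  obtain ⟨x, hamx, hax, hfx⟩ := (hamf.and (haf.and ((coeFn_nonneg f).2 hf0))).exists
  have hfx : 0 < f x := (show 0 ≤ f x from hfx).lt_of_ne fun h => by simp [← h] at hamx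
  have ha : 0 < a := by
    refine (nonneg_of_mul_nonneg_left hax hfx).lt_of_ne' fun ha0 => ?_
    simp [ha0, zero_pow (Nat.one_le_iff_ne_zero.1 hm)] at hamx
  exact ⟨ha, by filter_upwards [hamf] with x hx using pos_of_mul_pos_right hx (pow_pos ha m).le⟩

theorem exists_le_smul_of_ae_eventually_le (hp : p ≠ ∞) {T : Lp ℝ p μ →L[ℝ] Lp ℝ p μ}
    (hT : Monotone T) {n : ℕ} (hK : IsCompactOperator (T ^ n)) {f g : Lp ℝ p μ} {a b : ℝ}
    (hf0 : 0 ≤ f) (hfa : T f = a • f) (hgb : T g = b • g) (ha : 0 < a) (hab : a ≤ b)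
    {t : ℕ → ℝ} (ht : ∀ k, 0 ≤ t k) (hev : ∀ᵐ x ∂μ, ∀ᶠ k in atTop, g x ≤ t k * f x) :
    ∃ k, g ≤ t k • f := by
  by_contra! hgt
  have hb : 0 < b := ha.trans_le hab
  set u : ℕ → Lp ℝ p μ := fun k => (g - t k • f)⁺
  have hu : ∀ k, u k ≠ 0 := fun k hk => hgt k (sub_nonpos.1 (posPart_eq_zero.1 hk))
  have hTn : Monotone (T ^ n) := by
    rw [FunLike.coe_pow_eq_iterate]
    exact hT.iterate n
  have hsuper : ∀ k, b ^ n • u k ≤ (T ^ n) (u k) := fun k => by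
    refine smul_posPart_le_of_smul_le hTn (pow_pos hb n) ?_
    rw [map_sub, map_smul, ContinuousLinearMap.pow_apply_of_apply_eq_smul hfa,
      ContinuousLinearMap.pow_apply_of_apply_eq_smul hgb, smul_sub, smul_comm _ (t k)]
    exact sub_le_sub_left (smul_le_smul_of_nonneg_left
      (smul_le_smul_of_nonneg_right (pow_le_pow_left₀ ha.le hab n) hf0) (ht k)) _
  set v : ℕ → Lp ℝ p μ := fun k => ‖u k‖⁻¹ • u k
  refine not_ae_tendsto_zero_of_smul_le_of_isCompactOperator hp hK (pow_pos hb n) (v := v)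
    (fun k => norm_smul_inv_norm (hu k)) (fun k => smul_nonneg (by positivity) (posPart_nonneg _))
    (fun k => ?_) ?_
  · rw [map_smul, smul_comm]
    exact smul_le_smul_of_nonneg_left (hsuper k) (by positivity)
  · have hv : ∀ᵐ x ∂μ, ∀ k, v k x = ‖u k‖⁻¹ * max (g x - t k * f x) 0 := by
      refine ae_all_iff.2 fun k => ?_
      filter_upwards [coeFn_smul ‖u k‖⁻¹ (u k), coeFn_sup (g - t k • f) 0, coeFn_sub g (t k • f),
        coeFn_smul (t k) f, coeFn_zero ℝ p μ] with x h1 h2 h3 h4 h5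
      rw [h1, Pi.smul_apply, smul_eq_mul]
      change _ * ((g - t k • f) ⊔ 0 : Lp ℝ p μ) x = _
      rw [h2, Pi.sup_apply, h3, Pi.sub_apply, h4, Pi.smul_apply, smul_eq_mul, h5, Pi.zero_apply]
    filter_upwards [hev, hv] with x hx hvx
    refine tendsto_const_nhds.congr' ?_
    filter_upwards [hx] with k hk
    simp [hvx k, hk]

theorem IsEventuallyStronglyPositive.exists_eq_smul_of_le (hp : p ≠ ∞)
    {T : Lp ℝ p μ →L[ℝ] Lp ℝ p μ} (hT : IsEventuallyStronglyPositive T) (hmono : Monotone T) {n : ℕ}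
    (hK : IsCompactOperator (T ^ n)) {f g : Lp ℝ p μ} {a b : ℝ} (hf0 : 0 ≤ f) (hf : f ≠ 0)
    (hfa : T f = a • f) (hg0 : 0 ≤ g) (hg : g ≠ 0) (hgb : T g = b • g) (hab : a ≤ b) :
    ∃ c : ℝ, g = c • f := by
  obtain ⟨ha, hfpos⟩ := hT.pos_and_ae_pos_of_apply_eq_smul hmono hf0 hf hfa
  have hS : ∃ t : ℝ, g ≤ t • f := by
    obtain ⟨k, hk⟩ := exists_le_smul_of_ae_eventually_le hp hmono hK hf0 hfa hgb ha hab
      (t := fun k : ℕ => (k : ℝ)) (fun k => k.cast_nonneg) (by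
        filter_upwards [hfpos] with x hx
        exact (tendsto_natCast_atTop_atTop.atTop_mul_const hx).eventually_ge_atTop (g x))
    exact ⟨k, hk⟩
  obtain ⟨σ, hσ, hleast⟩ := exists_pos_isLeast_setOf_le_smul hf0 hg0 hg hS
  obtain rfl : a = b :=
    le_antisymm hab (le_of_isLeast_setOf_le_smul hmono hfa hgb (ha.trans_le hab) hσ hleast)
  refine ⟨σ, by_contra fun hne => ?_⟩
  have hh : σ • f - g ≠ 0 := sub_ne_zero.2 (Ne.symm hne)
  have hha : T (σ • f - g) = a • (σ • f - g) := by
    rw [map_sub, map_smul, hfa, hgb, smul_sub, smul_comm]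
  obtain ⟨-, hhpos⟩ :=
    hT.pos_and_ae_pos_of_apply_eq_smul hmono (sub_nonneg.2 hleast.1) hh hha
  obtain ⟨t, -, ht, hlim⟩ := exists_seq_strictMono_tendsto' hσ
  obtain ⟨k, hk⟩ := exists_le_smul_of_ae_eventually_le hp hmono hK hf0 hfa hgb ha le_rfl
    (fun k => (ht k).1.le) (by
      filter_upwards [hhpos, coeFn_sub (σ • f) g, coeFn_smul σ f] with x hx h1 h2
      rw [h1, Pi.sub_apply, h2, Pi.smul_apply, smul_eq_mul, sub_pos] at hx
      exact (hlim.mul_const (f x)).eventually (eventually_ge_nhds hx))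
  exact (ht k).2.not_ge (hleast.2 hk)

end MeasureTheory.Lp

theorem stmt1_general {X : Type*} [MeasurableSpace X] {μ : Measure X}
    {p : ℝ≥0∞} [Fact (1 ≤ p)] (hp : p ≠ ∞)
    (T : Lp ℝ p μ →L[ℝ] Lp ℝ p μ)
    (hpos : ∀ f : Lp ℝ p μ, 0 ≤ᵐ[μ] ⇑f → 0 ≤ᵐ[μ] ⇑(T f))
    (hesp : ∀ f : Lp ℝ p μ, 0 ≤ᵐ[μ] ⇑f → f ≠ 0 →
      ∃ n : ℕ, 1 ≤ n ∧ ∀ᵐ x ∂μ, 0 < ((T ^ n) f : Lp ℝ p μ) x)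
    (hcpt : ∃ n : ℕ, 1 ≤ n ∧ IsCompactOperator ⇑(T ^ n))
    (f g : Lp ℝ p μ) (a b : ℝ)
    (hf0 : 0 ≤ᵐ[μ] ⇑f) (hfne : f ≠ 0) (hfeig : T f = a • f)
    (hg0 : 0 ≤ᵐ[μ] ⇑g) (hgne : g ≠ 0) (hgeig : T g = b • g) :
    ∃ c : ℝ, g = c • f := by
  obtain ⟨n, -, hK⟩ := hcpt
  have hT : Lp.IsEventuallyStronglyPositive T := hesp
  have hmono : Monotone T := (monotone_iff_map_nonneg T).2 fun u hu =>
    (Lp.coeFn_nonneg _).1 (hpos u ((Lp.coeFn_nonneg u).2 hu))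
  rw [Lp.coeFn_nonneg] at hf0 hg0
  rcases le_total a b with hab | hba
  · exact hT.exists_eq_smul_of_le hp hmono hK hf0 hfne hfeig hg0 hgne hgeig hab
  · obtain ⟨c, rfl⟩ := hT.exists_eq_smul_of_le hp hmono hK hg0 hgne hgeig hf0 hfne hfeig hba
    have hc : c ≠ 0 := by rintro rfl; simp at hfne
    exact ⟨c⁻¹, (inv_smul_smul₀ hc g).symm⟩

/-- a bounded positive operator on `L^p` with eventual strong positivity, a compact
power, and positive spectral radius has at most one (up to scale) a.e. non-negative nonzero
eigenfunction. -/
theorem stmt1 {X : Type*} [MeasurableSpace X] {μ : Measure X} [SigmaFinite μ]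
    {p : ℝ≥0∞} [Fact (1 ≤ p)] (hp : p ≠ ∞)
    (T : Lp ℝ p μ →L[ℝ] Lp ℝ p μ)
    (hpos : ∀ f : Lp ℝ p μ, 0 ≤ᵐ[μ] ⇑f → 0 ≤ᵐ[μ] ⇑(T f))
    (hesp : ∀ f : Lp ℝ p μ, 0 ≤ᵐ[μ] ⇑f → f ≠ 0 →
      ∃ n : ℕ, 1 ≤ n ∧ ∀ᵐ x ∂μ, 0 < ((T ^ n) f : Lp ℝ p μ) x)
    (hcpt : ∃ n : ℕ, 1 ≤ n ∧ IsCompactOperator ⇑(T ^ n))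
    (hr : 0 < spectralRadius ℝ T)
    (f g : Lp ℝ p μ) (a b : ℝ)
    (hf0 : 0 ≤ᵐ[μ] ⇑f) (hfne : f ≠ 0) (hfeig : T f = a • f)
    (hg0 : 0 ≤ᵐ[μ] ⇑g) (hgne : g ≠ 0) (hgeig : T g = b • g) :
    ∃ c : ℝ, g = c • f :=
  stmt1_general hp T hpos hesp hcpt f g a b hf0 hfne hfeig hg0 hgne hgeig
end

section
/- Let $T$ be a bounded positive linear operator on $L^p$ ($1 \le p < \infty$) satisfying eventual strong positivity, power compactness ($T^n$ compact for some $n$), and $r(T) > 0$. Then there exists $\bar f \in L^p$ with $\bar f > 0$ a.e. such that $T\bar f = r(T)\bar f$; in particular, $r(T)$ is an eigenvalue of $T$. -/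
/-!
For a positive operator the resolvent `R(λ) = (λ - T)⁻¹` is positive for `λ > ‖T‖` (Neumann
series). Positivity survives as `λ` decreases through the resolvent set: the set of good `λ` is
closed by continuity of the resolvent and open downwards by a second Neumann series
`R(s - d) = ∑ dᵏ R(s)ᵏ⁺¹`. Hence `R(λ) ≥ 0` for `λ > r := r(T)`. If `r` were not in the spectrum,
this would hold slightly below `r` too, and `R(λ) ≥ λ⁻⁽ⁿ⁺¹⁾ Tⁿ` would confine the spectrum to
`[-λ, λ]`, contradicting `r = sup |σ(T)|`. So `‖R(λ)‖ ≥ (λ - r)⁻¹ → ∞` as `λ ↓ r`, and normalising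
`R(λ) |f|` for almost norming `f` gives positive unit vectors `v` with `T v - r v → 0`; compactness
of `Tⁿ` makes a subsequence converge, to a positive eigenvector. Eventual strong positivity upgrades
it to an a.e. strictly positive one, as `Tᵐ v = rᵐ v`.
-/

open MeasureTheory Filter Topology
open scoped ENNReal

section PositiveOperator

variable {E : Type*} [NormedAddCommGroup E] [NormedSpace ℝ E] [PartialOrder E]

/-- Positivity in the order of `E`; Mathlib's `ContinuousLinearMap.IsPositive` is the
inner-product notion. -/
def IsPositiveOperator (T : E →L[ℝ] E) : Prop :=
  ∀ f, 0 ≤ f → 0 ≤ T f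

namespace IsPositiveOperator

variable {S T : E →L[ℝ] E}

theorem zero : IsPositiveOperator (0 : E →L[ℝ] E) := fun _ _ => le_rfl

theorem one : IsPositiveOperator (1 : E →L[ℝ] E) := fun _ hf => hf

theorem mul (hS : IsPositiveOperator S) (hT : IsPositiveOperator T) :
    IsPositiveOperator (S * T) :=
  fun f hf => hS _ (hT f hf)

theorem pow (hT : IsPositiveOperator T) : ∀ n : ℕ, IsPositiveOperator (T ^ n)
  | 0 => one
  | n + 1 => by rw [pow_succ]; exact (hT.pow n).mul hT

theorem add [IsOrderedAddMonoid E] (hS : IsPositiveOperator S) (hT : IsPositiveOperator T) :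
    IsPositiveOperator (S + T) :=
  fun f hf => add_nonneg (hS f hf) (hT f hf)

theorem smul [PosSMulMono ℝ E] (hT : IsPositiveOperator T) {c : ℝ} (hc : 0 ≤ c) :
    IsPositiveOperator (c • T) :=
  fun f hf => smul_nonneg hc (hT f hf)

theorem of_tendsto [ClosedIciTopology E] {ι : Type*} {l : Filter ι} [l.NeBot]
    {F : ι → E →L[ℝ] E} (hF : Tendsto F l (𝓝 T)) (hpos : ∀ᶠ i in l, IsPositiveOperator (F i)) :
    IsPositiveOperator T := fun f hf =>
  isClosed_Ici.mem_of_tendsto (((ContinuousLinearMap.apply ℝ E f).continuous.tendsto T).comp hF)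
    (hpos.mono fun _ hi => hi f hf)

theorem of_hasSum [IsOrderedAddMonoid E] [ClosedIciTopology E] {F : ℕ → E →L[ℝ] E}
    (hF : HasSum F T) (hpos : ∀ n, IsPositiveOperator (F n)) : IsPositiveOperator T :=
  of_tendsto hF <| Eventually.of_forall fun _ =>
    Finset.sum_induction F IsPositiveOperator (fun _ _ => add) zero fun n _ => hpos n

end IsPositiveOperator

end PositiveOperator

section SpectralRadius

variable {𝕜 A : Type*} [NormedField 𝕜] [NormedRing A] [NormedAlgebra 𝕜 A] [CompleteSpace A]

theorem spectrum.spectralRadius_ne_top (a : A) : spectralRadius 𝕜 a ≠ ⊤ :=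
  ne_top_of_le_ne_top ENNReal.coe_ne_top <| iSup₂_le fun k hk => ENNReal.coe_le_coe.2
    (show ‖k‖₊ ≤ ‖a‖₊ * ‖(1 : A)‖₊ from mod_cast spectrum.norm_le_norm_mul_of_mem hk)

theorem spectrum.norm_le_toReal_spectralRadius {a : A} {k : 𝕜} (hk : k ∈ spectrum 𝕜 a) :
    ‖k‖ ≤ (spectralRadius 𝕜 a).toReal :=
  (ENNReal.toReal_le_toReal ENNReal.coe_ne_top (spectrum.spectralRadius_ne_top a)).2
    (le_iSup₂ (f := fun k (_ : k ∈ spectrum 𝕜 a) => (‖k‖₊ : ℝ≥0∞)) k hk)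

theorem spectrum.norm_le_of_norm_pow_le {a : A} {k : 𝕜} (hk : k ∈ spectrum 𝕜 a) {C r : ℝ}
    (hr : 0 < r) (h : ∀ n : ℕ, ‖a ^ n‖ ≤ C * r ^ n) : ‖k‖ ≤ r := by
  by_contra! hlt
  have hbound : ∀ n : ℕ, (‖k‖ / r) ^ n ≤ C * ‖(1 : A)‖ := fun n => by
    rw [div_pow, div_le_iff₀ (pow_pos hr n), ← norm_pow]
    calc ‖k ^ n‖ ≤ ‖a ^ n‖ * ‖(1 : A)‖ := norm_le_norm_mul_of_mem (pow_mem_pow a n hk)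
      _ ≤ C * r ^ n * ‖(1 : A)‖ := by gcongr; exact h n
      _ = C * ‖(1 : A)‖ * r ^ n := by ring
  obtain ⟨n, hn⟩ := ((tendsto_pow_atTop_atTop_of_one_lt ((one_lt_div hr).2 hlt)).eventually_gt_atTop
    (C * ‖(1 : A)‖)).exists
  exact (hbound n).not_gt hn

theorem spectrum.inv_norm_sub_le_norm_resolvent [NormOneClass A] {a : A} {k lam : 𝕜}
    (hk : k ∈ spectrum 𝕜 a) (hlam : lam ∈ resolventSet 𝕜 a) :
    ‖lam - k‖⁻¹ ≤ ‖resolvent a lam‖ := by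
  have := NormOneClass.nontrivial (G := A)
  obtain ⟨u, hu⟩ := spectrum.mem_resolventSet_iff.1 hlam
  rw [resolvent, ← hu, Ring.inverse_unit]
  refine inv_le_of_inv_le₀ (Units.norm_pos _) (not_lt.1 fun hlt => hk ?_)
  refine (u.ofNearby (algebraMap 𝕜 A k - a) ?_).isUnit
  rwa [hu, sub_sub_sub_cancel_right, ← map_sub, norm_algebraMap', norm_sub_rev]

end SpectralRadius

theorem ContinuousLinearMap.pow_apply_eq_pow_smul {𝕜 E : Type*} [NormedField 𝕜]
    [NormedAddCommGroup E] [NormedSpace 𝕜 E] {T : E →L[𝕜] E} {r : 𝕜} {v : E} (h : T v = r • v) :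
    ∀ n : ℕ, (T ^ n) v = r ^ n • v
  | 0 => by simp
  | n + 1 => by
    rw [pow_succ, mul_apply_eq_comp, h, map_smul, pow_apply_eq_pow_smul h n, smul_smul,
      pow_succ']

theorem exists_mem_apply_eq_smul_of_tendsto {𝕜 E : Type*} [NontriviallyNormedField 𝕜]
    [NormedAddCommGroup E] [NormedSpace 𝕜 E] {T : E →L[𝕜] E} {n : ℕ}
    (hT : IsCompactOperator (T ^ n)) {r : 𝕜} (hr : r ≠ 0) {C : Set E} (hC : IsClosed C)
    {v : ℕ → E} (hvC : ∀ l, v l ∈ C) {M : ℝ} (hvM : ∀ l, ‖v l‖ ≤ M)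
    (hv : Tendsto (fun l => T (v l) - r • v l) atTop (𝓝 0)) : ∃ x ∈ C, T x = r • x := by
  have hpow : Tendsto (fun l => (T ^ n) (v l) - r ^ n • v l) atTop (𝓝 0) := by
    set P := ∑ i ∈ Finset.range n, T ^ i * algebraMap 𝕜 (E →L[𝕜] E) r ^ (n - 1 - i)
    have hP : ∀ x, (T ^ n) x - r ^ n • x = P (T x - r • x) := fun x => by
      have := congr($((Algebra.commute_algebraMap_right r T).geom_sum₂_mul n) x)
      rw [mul_apply_eq_comp, sub_apply, sub_apply, ContinuousLinearMap.algebraMap_apply,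
        ← map_pow, ContinuousLinearMap.algebraMap_apply] at this
      exact this.symm
    simpa only [hP, map_zero, Function.comp_def] using (P.continuous.tendsto 0).comp hv
  obtain ⟨w, -, φ, hφ, hw⟩ := (hT.isCompact_closure_image_closedBall (f := (T ^ n).toLinearMap) M)
    |>.tendsto_subseq fun l => subset_closure ⟨v l, mem_closedBall_zero_iff.2 (hvM l), rfl⟩
  have hx : Tendsto (v ∘ φ) atTop (𝓝 ((r ^ n)⁻¹ • w)) := by
    have := (hw.sub (hpow.comp hφ.tendsto_atTop)).const_smul (r ^ n)⁻¹
    simpa only [Function.comp_def, ContinuousLinearMap.coe_coe, sub_zero, sub_sub_cancel,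
      smul_smul, inv_mul_cancel₀ (pow_ne_zero n hr), one_smul] using this
  refine ⟨_, hC.mem_of_tendsto hx (Eventually.of_forall fun l => hvC _), ?_⟩
  have hlim := ((T.continuous.tendsto _).comp hx).sub (hx.const_smul r)
  exact sub_eq_zero.1 (tendsto_nhds_unique hlim (hv.comp hφ.tendsto_atTop))

section Resolvent

variable {E : Type*} [NormedAddCommGroup E] [NormedSpace ℝ E] [CompleteSpace E] [PartialOrder E]
  [ClosedIciTopology E] {T : E →L[ℝ] E}

theorem isPositiveOperator_resolvent_of_nhdsGT {s : ℝ} (hs : s ∈ resolventSet ℝ T)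
    (h : ∀ᶠ lam in 𝓝[>] s, IsPositiveOperator (resolvent T lam)) :
    IsPositiveOperator (resolvent T s) :=
  .of_tendsto ((spectrum.hasDerivAt_resolvent_const_left hs).continuousAt.tendsto.mono_left
    nhdsWithin_le_nhds) h

variable [IsOrderedAddMonoid E]

theorem IsPositiveOperator.inverse_one_sub {P : E →L[ℝ] E} (hP : IsPositiveOperator P)
    (h : ‖P‖ < 1) : IsPositiveOperator (Ring.inverse (1 - P)) :=
  of_hasSum (hasSum_geom_series_inverse P h) hP.pow

theorem IsPositiveOperator.resolvent_of_norm_lt [PosSMulMono ℝ E] (hT : IsPositiveOperator T)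
    {lam : ℝ} (h : ‖T‖ < lam) : IsPositiveOperator (resolvent T lam) := by
  have hlam : 0 < lam := (norm_nonneg T).trans_lt h
  have hnorm : ‖lam⁻¹ • T‖ < 1 := by
    rwa [norm_smul, Real.norm_of_nonneg (inv_nonneg.2 hlam.le), inv_mul_lt_iff₀ hlam, mul_one]
  have hR : lam • resolvent T lam = Ring.inverse (1 - lam⁻¹ • T) := by
    simpa [resolvent, Units.smul_def] using
      spectrum.units_smul_resolvent_self (r := Units.mk0 lam hlam.ne') (a := T)
  have := ((hT.smul (inv_nonneg.2 hlam.le)).inverse_one_sub hnorm).smul (inv_nonneg.2 hlam.le)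
  rwa [← hR, smul_smul, inv_mul_cancel₀ hlam.ne', one_smul] at this

theorem IsPositiveOperator.resolvent_sub [PosSMulMono ℝ E] {s d : ℝ}
    (hR : IsPositiveOperator (resolvent T s)) (hs : s ∈ resolventSet ℝ T) (hd : 0 ≤ d)
    (hdR : d * ‖resolvent T s‖ < 1) : IsPositiveOperator (resolvent T (s - d)) := by
  have hnorm : ‖d • resolvent T s‖ < 1 := by rwa [norm_smul, Real.norm_of_nonneg hd]
  have hfac : algebraMap ℝ (E →L[ℝ] E) (s - d) - T =
      (algebraMap ℝ (E →L[ℝ] E) s - T) * (1 - d • resolvent T s) := by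
    rw [mul_sub, mul_one, mul_smul_comm, resolvent,
      Ring.mul_inverse_cancel _ (spectrum.mem_resolventSet_iff.1 hs), map_sub,
      Algebra.algebraMap_eq_smul_one d]
    abel
  rw [resolvent, hfac, Ring.inverse_mul (Or.inl hs)]
  exact ((hR.smul hd).inverse_one_sub hnorm).mul hR

theorem IsPositiveOperator.resolvent_of_Ici_subset [PosSMulMono ℝ E] (hT : IsPositiveOperator T)
    {lam : ℝ} (h : Set.Ici lam ⊆ resolventSet ℝ T) : IsPositiveOperator (resolvent T lam) := by
  set A := {t : ℝ | ∀ μ, t ≤ μ → IsPositiveOperator (resolvent T μ)}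
  suffices lam ∈ A from this lam le_rfl
  by_contra hlam
  have hA : ‖T‖ + 1 ∈ A := fun μ hμ => hT.resolvent_of_norm_lt (by linarith)
  have hlt : ∀ t ∈ A, lam < t := fun t ht =>
    lt_of_not_ge fun htl => hlam fun μ hμ => ht μ (htl.trans hμ)
  have hls : lam ≤ sInf A := le_csInf ⟨_, hA⟩ fun t ht => (hlt t ht).le
  set s := sInf A
  have hsA : s ∈ A := by
    have hgt : ∀ μ, s < μ → IsPositiveOperator (resolvent T μ) := fun μ hμ => by
      obtain ⟨t, ht, htμ⟩ := exists_lt_of_csInf_lt ⟨_, hA⟩ hμ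
      exact ht μ htμ.le
    intro μ hμ
    rcases hμ.lt_or_eq with hμ | rfl
    · exact hgt μ hμ
    · exact isPositiveOperator_resolvent_of_nhdsGT (h hls) (eventually_nhdsWithin_of_forall hgt)
  -- the resolvent stays positive on `[s - d, s]`, contradicting the minimality of `s`
  set d := (‖resolvent T s‖ + 1)⁻¹
  have hdR : d * ‖resolvent T s‖ < 1 := by
    rw [inv_mul_lt_iff₀ (by positivity)]
    linarith
  have hdA : s - d ∈ A := fun μ hμ => by
    rcases le_or_gt μ s with hμs | hμs
    · have := (hsA s le_rfl).resolvent_sub (h hls) (d := s - μ) (by linarith)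
        ((mul_le_mul_of_nonneg_right (by linarith) (norm_nonneg _)).trans_lt hdR)
      rwa [sub_sub_cancel] at this
    · exact hsA μ hμs.le
  have := csInf_le ⟨lam, fun t ht => (hlt t ht).le⟩ hdA
  linarith [show 0 < d by positivity]

end Resolvent

section BanachLattice

variable {E : Type*} [NormedAddCommGroup E] [NormedSpace ℝ E] [Lattice E] [IsOrderedAddMonoid E]
  {S T : E →L[ℝ] E}

namespace IsPositiveOperator

theorem abs_apply_le (hT : IsPositiveOperator T) (f : E) : |T f| ≤ T |f| := by
  have h₁ := hT _ (sub_nonneg.2 (le_abs_self f))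
  have h₂ := hT _ (neg_le_iff_add_nonneg'.1 (neg_le_abs f))
  rw [map_sub] at h₁
  rw [map_add] at h₂
  exact abs_le'.2 ⟨sub_nonneg.1 h₁, neg_le_iff_add_nonneg'.2 h₂⟩

variable [HasSolidNorm E]

theorem norm_apply_le (hT : IsPositiveOperator T) (f : E) : ‖T f‖ ≤ ‖T |f|‖ :=
  HasSolidNorm.solid ((hT.abs_apply_le f).trans (le_abs_self _))

theorem opNorm_le_of_sub (hS : IsPositiveOperator S) (hTS : IsPositiveOperator (T - S)) :
    ‖S‖ ≤ ‖T‖ := by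
  refine S.opNorm_le_bound (norm_nonneg T) fun f => ?_
  have hSf := hS _ (abs_nonneg f)
  have hSTf : S |f| ≤ T |f| := sub_nonneg.1 (hTS _ (abs_nonneg f))
  calc ‖S f‖ ≤ ‖S |f|‖ := hS.norm_apply_le f
    _ ≤ ‖T |f|‖ := HasSolidNorm.solid (abs_le_abs_of_nonneg hSf hSTf)
    _ ≤ ‖T‖ * ‖|f|‖ := T.le_opNorm _
    _ = ‖T‖ * ‖f‖ := by rw [norm_abs_eq_norm]

variable [PosSMulMono ℝ E]

/-- `R(λ) = λ⁻¹ (1 + T R(λ))` is iterated into `R(λ) ≥ λ^{-(n+1)} Tⁿ`. -/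
theorem norm_pow_le_pow_mul_norm_resolvent (hT : IsPositiveOperator T) {lam : ℝ} (hlam : 0 < lam)
    (hs : lam ∈ resolventSet ℝ T) (hR : IsPositiveOperator (resolvent T lam)) (n : ℕ) :
    ‖T ^ n‖ ≤ lam ^ (n + 1) * ‖resolvent T lam‖ := by
  set R := resolvent T lam
  set c := lam⁻¹
  have hc : 0 ≤ c := inv_nonneg.2 hlam.le
  have hRid : R = c • 1 + c • (T * R) := by
    have h1 : algebraMap ℝ (E →L[ℝ] E) lam * R - T * R = 1 := by
      rw [← sub_mul]; exact Ring.mul_inverse_cancel _ hs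
    rw [← Algebra.smul_def] at h1
    rw [← smul_add, ← eq_add_of_sub_eq h1, smul_smul, inv_mul_cancel₀ hlam.ne', one_smul]
  have key : ∀ n : ℕ, IsPositiveOperator (R - c ^ (n + 1) • T ^ n) := by
    intro n
    induction n with
    | zero =>
      have : R - c ^ (0 + 1) • T ^ 0 = c • (T * R) := by
        conv_lhs => rw [hRid]
        rw [zero_add, pow_one, pow_zero]
        abel
      rw [this]
      exact (hT.mul hR).smul hc
    | succ n ih =>
      have : R - c ^ (n + 1 + 1) • T ^ (n + 1) = c • 1 + c • (T * (R - c ^ (n + 1) • T ^ n)) := by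
        rw [mul_sub, smul_sub, ← add_sub_assoc, ← hRid, mul_smul_comm, smul_smul, ← pow_succ',
          ← pow_succ']
      rw [this]
      exact (one.smul hc).add ((hT.mul ih).smul hc)
  have := ((hT.pow n).smul (pow_nonneg hc (n + 1))).opNorm_le_of_sub (key n)
  rwa [norm_smul, Real.norm_of_nonneg (pow_nonneg hc _), inv_pow, inv_mul_le_iff₀ (by positivity)]
    at this

end IsPositiveOperator

variable [HasSolidNorm E] [CompleteSpace E] [PosSMulMono ℝ E]

theorem IsPositiveOperator.exists_approx_eigenvector {k lam : ℝ}
    (hR : IsPositiveOperator (resolvent T lam)) (hk : k ∈ spectrum ℝ T)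
    (hlam : lam ∈ resolventSet ℝ T) (hkl : k < lam) :
    ∃ v : E, 0 ≤ v ∧ ‖v‖ = 1 ∧ ‖T v - k • v‖ ≤ 3 * (lam - k) := by
  have : Nontrivial E := by
    by_contra h
    rw [not_nontrivial_iff_subsingleton] at h
    simp at hk
  set R := resolvent T lam
  set δ := lam - k
  have hδ : 0 < δ := sub_pos.2 hkl
  have hRlow : δ⁻¹ ≤ ‖R‖ := by
    have := spectrum.inv_norm_sub_le_norm_resolvent hk hlam
    rwa [Real.norm_of_nonneg hδ.le] at this
  have hRpos : 0 < ‖R‖ := (inv_pos.2 hδ).trans_le hRlow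
  obtain ⟨f, hf1, hf2⟩ := R.exists_lt_apply_of_lt_opNorm (half_lt_self hRpos)
  -- `|f|` is a positive vector on which `R` is still almost normed
  set c := ‖R |f|‖
  have hc : ‖R‖ / 2 < c := hf2.trans_le (hR.norm_apply_le f)
  have hc0 : 0 < c := by linarith
  have hcδ : c⁻¹ ≤ 2 * δ := by
    rw [inv_le_comm₀ hc0 (by positivity), mul_inv, ← div_eq_inv_mul]
    linarith
  have hTR : T (R |f|) = lam • R |f| - |f| := by
    have := congr($(Ring.mul_inverse_cancel _ hlam) |f|)
    rw [mul_apply_eq_comp, sub_apply, ContinuousLinearMap.algebraMap_apply,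
      one_apply_eq_self] at this
    exact (sub_sub_cancel _ _).symm.trans (congrArg _ this)
  set v := c⁻¹ • R |f|
  have hv1 : ‖v‖ = 1 := by
    rw [norm_smul, Real.norm_of_nonneg (inv_nonneg.2 hc0.le), inv_mul_cancel₀ hc0.ne']
  have hTv : T v - k • v = δ • v - c⁻¹ • |f| := by
    rw [map_smul, hTR, smul_sub, smul_comm c⁻¹ lam, sub_smul]
    abel
  refine ⟨v, smul_nonneg (inv_nonneg.2 hc0.le) (hR _ (abs_nonneg f)), hv1, ?_⟩
  calc ‖T v - k • v‖ = ‖δ • v - c⁻¹ • |f|‖ := by rw [hTv]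
    _ ≤ ‖δ • v‖ + ‖c⁻¹ • |f|‖ := norm_sub_le _ _
    _ ≤ δ + 2 * δ := by
      rw [norm_smul δ v, hv1, norm_smul, norm_abs_eq_norm, Real.norm_of_nonneg hδ.le,
        Real.norm_of_nonneg (inv_nonneg.2 hc0.le), mul_one]
      linarith [mul_le_of_le_one_right (inv_nonneg.2 hc0.le) hf1.le]
    _ = 3 * δ := by ring

theorem IsPositiveOperator.spectralRadius_mem_spectrum (hT : IsPositiveOperator T)
    (hr : 0 < spectralRadius ℝ T) : (spectralRadius ℝ T).toReal ∈ spectrum ℝ T := by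
  set r := (spectralRadius ℝ T).toReal
  have hr0 : 0 < r := ENNReal.toReal_pos hr.ne' (spectrum.spectralRadius_ne_top T)
  have hne : (spectrum ℝ T).Nonempty :=
    Set.nonempty_iff_ne_empty.2 fun h => hr.ne' (by simp [spectralRadius, h])
  obtain ⟨k₀, hk₀, hk₀_eq⟩ := spectrum.exists_nnnorm_eq_spectralRadius_of_nonempty hne
  have hk₀r : ‖k₀‖ = r := by simpa using congrArg ENNReal.toReal hk₀_eq
  by_contra hrσ
  obtain ⟨ε, hε, hball⟩ := Metric.isOpen_iff.1 (spectrum.isOpen_resolventSet T) r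
    (Set.notMem_compl_iff.1 hrσ)
  -- below `r` the resolvent set still contains `[lam, ∞)`, so `R(lam) ≥ 0` bounds the spectrum
  set lam := max (r - ε / 2) (r / 2)
  have hlam0 : 0 < lam := lt_max_of_lt_right (by positivity)
  have hlamr : lam < r := max_lt (by linarith) (by linarith)
  have hIci : Set.Ici lam ⊆ resolventSet ℝ T := fun μ hμ => by
    by_contra hμσ
    have hμr : μ ≤ r := (le_abs_self μ).trans (spectrum.norm_le_toReal_spectralRadius hμσ)
    refine hμσ (hball ?_)
    rw [Metric.mem_ball, Real.dist_eq, abs_sub_lt_iff]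
    constructor <;> linarith [le_max_left (r - ε / 2) (r / 2), Set.mem_Ici.1 hμ]
  have hR := hT.resolvent_of_Ici_subset hIci
  have := spectrum.norm_le_of_norm_pow_le hk₀ hlam0 (C := lam * ‖resolvent T lam‖) fun n =>
    (hT.norm_pow_le_pow_mul_norm_resolvent hlam0 (hIci Set.self_mem_Ici) hR n).trans_eq (by ring)
  linarith

theorem IsPositiveOperator.exists_nonneg_eigenvector (hT : IsPositiveOperator T) {n : ℕ}
    (hcpt : IsCompactOperator (T ^ n)) (hr : 0 < spectralRadius ℝ T) :
    ∃ v : E, 0 ≤ v ∧ ‖v‖ = 1 ∧ T v = (spectralRadius ℝ T).toReal • v := by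
  set r := (spectralRadius ℝ T).toReal
  have hr0 : 0 < r := ENNReal.toReal_pos hr.ne' (spectrum.spectralRadius_ne_top T)
  have hrσ := hT.spectralRadius_mem_spectrum hr
  have hIci : ∀ lam, r < lam → Set.Ici lam ⊆ resolventSet ℝ T := fun lam hlam μ hμ =>
    Set.notMem_compl_iff.1 fun hμσ => ((le_abs_self μ).trans
      (spectrum.norm_le_toReal_spectralRadius hμσ)).not_gt (hlam.trans_le (Set.mem_Ici.1 hμ))
  have happrox : ∀ l : ℕ, ∃ v : E, (0 ≤ v ∧ ‖v‖ = 1) ∧ ‖T v - r • v‖ ≤ 3 * (1 / (l + 1)) :=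
    fun l => by
      have hlam : r < r + 1 / (l + 1) := lt_add_of_pos_right r (by positivity)
      obtain ⟨v, hv0, hv1, hv⟩ := (hT.resolvent_of_Ici_subset (hIci _ hlam))
        |>.exists_approx_eigenvector hrσ (hIci _ hlam Set.self_mem_Ici) hlam
      exact ⟨v, ⟨hv0, hv1⟩, by rwa [add_sub_cancel_left] at hv⟩
  choose v hvC hv using happrox
  have hlim : Tendsto (fun l => T (v l) - r • v l) atTop (𝓝 0) :=
    squeeze_zero_norm hv (by simpa using tendsto_one_div_add_atTop_nhds_zero_nat.const_mul (3 : ℝ))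
  obtain ⟨x, ⟨hx0, hx1⟩, hTx⟩ := exists_mem_apply_eq_smul_of_tendsto hcpt hr0.ne'
    (isClosed_nonneg.inter (isClosed_eq continuous_norm continuous_const)) hvC
    (fun l => (hvC l).2.le) hlim
  exact ⟨x, hx0, hx1, hTx⟩

end BanachLattice

instance MeasureTheory.Lp.instPosSMulMono_s2 {X : Type*} [MeasurableSpace X] {μ : Measure X}
    {p : ℝ≥0∞} : PosSMulMono ℝ (Lp ℝ p μ) :=
  .of_smul_nonneg fun c hc f hf => by
    rw [← Lp.coeFn_nonneg] at hf ⊢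
    filter_upwards [Lp.coeFn_smul c f, hf] with x hcf hfx
    rw [hcf]
    exact smul_nonneg hc hfx

theorem stmt2_general {X : Type*} [MeasurableSpace X] {μ : Measure X}
    {p : ℝ≥0∞} [Fact (1 ≤ p)]
    (T : Lp ℝ p μ →L[ℝ] Lp ℝ p μ)
    (hpos : ∀ f : Lp ℝ p μ, 0 ≤ᵐ[μ] ⇑f → 0 ≤ᵐ[μ] ⇑(T f))
    (hesp : ∀ f : Lp ℝ p μ, 0 ≤ᵐ[μ] ⇑f → f ≠ 0 →
      ∃ n : ℕ, 1 ≤ n ∧ ∀ᵐ x ∂μ, 0 < ((T ^ n) f : Lp ℝ p μ) x)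
    (hcpt : ∃ n : ℕ, 1 ≤ n ∧ IsCompactOperator ⇑(T ^ n))
    (hr : 0 < spectralRadius ℝ T) :
    ∃ fbar : Lp ℝ p μ, fbar ≠ 0 ∧ (∀ᵐ x ∂μ, 0 < fbar x) ∧
      T fbar = (spectralRadius ℝ T).toReal • fbar := by
  obtain ⟨n, -, hn⟩ := hcpt
  have hT : IsPositiveOperator T := fun f hf =>
    (Lp.coeFn_nonneg _).1 (hpos f ((Lp.coeFn_nonneg f).2 hf))
  obtain ⟨v, hv0, hv1, hTv⟩ := hT.exists_nonneg_eigenvector hn hr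
  have hv : v ≠ 0 := by rintro rfl; simp at hv1
  refine ⟨v, hv, ?_, hTv⟩
  obtain ⟨m, -, hm⟩ := hesp v ((Lp.coeFn_nonneg v).2 hv0) hv
  rw [ContinuousLinearMap.pow_apply_eq_pow_smul hTv m] at hm
  filter_upwards [hm, Lp.coeFn_smul ((spectralRadius ℝ T).toReal ^ m) v] with x hx hsx
  rw [hsx, Pi.smul_apply, smul_eq_mul] at hx
  exact pos_of_mul_pos_right hx (pow_nonneg ENNReal.toReal_nonneg m)

/-- existence of an a.e. strictly positive eigenfunction for the spectral radius. -/
theorem stmt2 {X : Type*} [MeasurableSpace X] {μ : Measure X} [SigmaFinite μ]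
    {p : ℝ≥0∞} [Fact (1 ≤ p)] (hp : p ≠ ∞)
    (T : Lp ℝ p μ →L[ℝ] Lp ℝ p μ)
    (hpos : ∀ f : Lp ℝ p μ, 0 ≤ᵐ[μ] ⇑f → 0 ≤ᵐ[μ] ⇑(T f))
    (hesp : ∀ f : Lp ℝ p μ, 0 ≤ᵐ[μ] ⇑f → f ≠ 0 →
      ∃ n : ℕ, 1 ≤ n ∧ ∀ᵐ x ∂μ, 0 < ((T ^ n) f : Lp ℝ p μ) x)
    (hcpt : ∃ n : ℕ, 1 ≤ n ∧ IsCompactOperator ⇑(T ^ n))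
    (hr : 0 < spectralRadius ℝ T) :
    ∃ fbar : Lp ℝ p μ, fbar ≠ 0 ∧ (∀ᵐ x ∂μ, 0 < fbar x) ∧
      T fbar = (spectralRadius ℝ T).toReal • fbar :=
  stmt2_general T hpos hesp hcpt hr
end

section
/- Let $\{X_t\}$ be a strictly stationary first-order Markov process with stationary distribution $Q$ on $(\mathcal X, \mathscr X)$, and let $T_n \psi(x) = \mathbb E[(\prod_{s=0}^{n-1} m(X_{t+s},X_{t+s+1},Y_{t+s+1}))\psi(X_{t+n}) \mid X_t = x]$ be positive pricing operators with $T_n = T^n$. Suppose: (a) for every $S \in \mathscr X$ with $Q(S) > 0$ there is $n \ge 1$ such that $\Pr(X_{t+n} \in S \mid X_t = x) > 0$ a.e.-$[Q]$; and (b) for each non-negative nonzero $\psi \in L^p(Q)$ and each $n$, $\mathbb E[\psi(X_{t+n}) \mid X_t = x] > 0$ a.e.-$[Q]$ implies $T_n \psi(x) > 0$ a.e.-$[Q]$. Then $T$ satisfies eventual strong positivity: for each nonzero non-negative $\psi \in L^p(Q)$ there exists $n \ge 1$ with $T^n \psi > 0$ a.e.-$[Q]$. -/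
open MeasureTheory ProbabilityTheory
open scoped ENNReal

/-!
Take `S = {ψ > 0}`, which has positive `Q`-measure since `ψ ≥ 0` and `ψ ≠ 0`. Irreducibility (a)
gives `n ≥ 1` with `κ n x S > 0` for a.e. `x`, so the conditional expected payoff
`∫⁻ y, ψ y ∂(κ n x)` is positive a.e., and no arbitrage (b) turns this into `T ^ n ψ > 0` a.e.
-/

section

variable {X : Type*} [MeasurableSpace X] {μ : Measure X}

lemma measure_setOf_pos_pos_of_nonneg {f : X → ℝ} (hf : 0 ≤ᵐ[μ] f) (hne : ¬f =ᵐ[μ] 0) :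
    0 < μ {x | 0 < f x} := by
  refine pos_iff_ne_zero.2 fun h => hne ?_
  filter_upwards [hf, measure_eq_zero_iff_ae_notMem.1 h] with x hx hxS
  exact le_antisymm (not_lt.1 hxS) hx

lemma Lp.measure_setOf_pos_pos {p : ℝ≥0∞} {f : Lp ℝ p μ} (hf : 0 ≤ᵐ[μ] f) (hne : f ≠ 0) :
    0 < μ {x | 0 < f x} :=
  measure_setOf_pos_pos_of_nonneg hf fun h => hne (Lp.eq_zero_iff_ae_eq_zero.2 h)

lemma lintegral_ofReal_pos_iff_measure_setOf_pos {f : X → ℝ} (hf : Measurable f) :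
    0 < ∫⁻ x, ENNReal.ofReal (f x) ∂μ ↔ 0 < μ {x | 0 < f x} := by
  rw [lintegral_pos_iff_support (f := fun x => ENNReal.ofReal (f x)) hf.ennreal_ofReal]
  congr! 3
  ext x
  simp [Function.mem_support, ENNReal.ofReal_eq_zero]

end

theorem stmt5_general {X : Type*} [MeasurableSpace X] (Q : Measure X)
    {p : ℝ≥0∞} [Fact (1 ≤ p)]
    (κ : ℕ → Kernel X X)
    (T : Lp ℝ p Q →L[ℝ] Lp ℝ p Q)
    -- (a) irreducibility / weak dependence:
    (ha : ∀ S : Set X, MeasurableSet S → 0 < Q S →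
      ∃ n : ℕ, 1 ≤ n ∧ ∀ᵐ x ∂Q, 0 < κ n x S)
    -- (b) no arbitrage: positive conditional expected payoff implies positive price:
    (hb : ∀ ψ : Lp ℝ p Q, 0 ≤ᵐ[Q] ⇑ψ → ψ ≠ 0 → ∀ n : ℕ, 1 ≤ n →
      (∀ᵐ x ∂Q, 0 < ∫⁻ y, ENNReal.ofReal (ψ y) ∂(κ n x)) →
      ∀ᵐ x ∂Q, 0 < ((T ^ n) ψ : Lp ℝ p Q) x) :
    -- eventual strong positivity:
    ∀ ψ : Lp ℝ p Q, 0 ≤ᵐ[Q] ⇑ψ → ψ ≠ 0 →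
      ∃ n : ℕ, 1 ≤ n ∧ ∀ᵐ x ∂Q, 0 < ((T ^ n) ψ : Lp ℝ p Q) x := by
  intro ψ hψ hψne
  have hψm : Measurable ψ := (Lp.stronglyMeasurable ψ).measurable
  obtain ⟨n, hn, hS⟩ := ha {x | 0 < ψ x} (measurableSet_lt measurable_const hψm)
    (Lp.measure_setOf_pos_pos hψ hψne)
  refine ⟨n, hn, hb ψ hψ hψne n hn ?_⟩
  filter_upwards [hS] with x hx
  exact (lintegral_ofReal_pos_iff_measure_setOf_pos hψm).2 hx

/-- Lemma 1: irreducibility of the state process (a) and the no-arbitrage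
condition (b) imply eventual strong positivity of the pricing operator `T`.  The `n`-step
transition of the stationary Markov state process is modelled by kernels `κ n`, with `Q` the
stationary distribution and `T_n = T ^ n` the pricing operators. -/
theorem stmt5 {X : Type*} [MeasurableSpace X] (Q : Measure X) [IsProbabilityMeasure Q]
    {p : ℝ≥0∞} [Fact (1 ≤ p)] (hp : p ≠ ∞)
    (κ : ℕ → Kernel X X) (hκQ : ∀ n, ∀ᵐ x ∂Q, κ n x ≪ Q)
    (hstat : ∀ n, Q.bind (κ n) = Q)
    (T : Lp ℝ p Q →L[ℝ] Lp ℝ p Q)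
    (hpos : ∀ ψ : Lp ℝ p Q, 0 ≤ᵐ[Q] ⇑ψ → 0 ≤ᵐ[Q] ⇑(T ψ))
    -- (a) irreducibility / weak dependence:
    (ha : ∀ S : Set X, MeasurableSet S → 0 < Q S →
      ∃ n : ℕ, 1 ≤ n ∧ ∀ᵐ x ∂Q, 0 < κ n x S)
    -- (b) no arbitrage: positive conditional expected payoff implies positive price:
    (hb : ∀ ψ : Lp ℝ p Q, 0 ≤ᵐ[Q] ⇑ψ → ψ ≠ 0 → ∀ n : ℕ, 1 ≤ n →
      (∀ᵐ x ∂Q, 0 < ∫⁻ y, ENNReal.ofReal (ψ y) ∂(κ n x)) →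
      ∀ᵐ x ∂Q, 0 < ((T ^ n) ψ : Lp ℝ p Q) x) :
    -- eventual strong positivity:
    ∀ ψ : Lp ℝ p Q, 0 ≤ᵐ[Q] ⇑ψ → ψ ≠ 0 →
      ∃ n : ℕ, 1 ≤ n ∧ ∀ᵐ x ∂Q, 0 < ((T ^ n) ψ : Lp ℝ p Q) x :=
  stmt5_general Q κ T ha hb
end
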